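/- Unramified sections functor lack of functoriality fix — specialization compatibility: let H be a presheaf of pointed sets on essentially smooth F-schemes with the strong Grothendieck–Serre property and satisfying purity in dimension 2 (for 2-dimensional local X, H(X) = ∩_{x∈X^{(1)}} H(O_{X,x}) inside H(K)). Then for a 2-dimensional essentially smooth local X with closed point z and function field K, and any codimension-1 point y₀ with essentially smooth closure, the specialization map H(O_{y₀}) → H(κ(y₀)) sends ∩_{y∈X^{(1)}} H(O_y) into H(O_{\overline{y₀},z}), and the composite ∩_{y∈X^{(1)}} H(O_y) → H(O_{\overline{y₀},z}) → H(κ(z)) is independent of the choice of y₀ — indeed both facts because ∩_{y∈X^{(1)}} H(O_y) = H(X) and the maps are restrictions along scheme morphisms. -/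
import Mathlib


/-- Axiom (A4) verification in Proposition 4.7 (prop:unramified-datum), abstract form.
`X` is a 2-dimensional essentially smooth local scheme with closed point `z` and function
field `K`; `ι` indexes the codimension-1 points `y` of `X`.  `HK = H(K)`, `HO y = H(O_{X,y})`
with injections `iK y` into `HK` (strong Grothendieck–Serre), `HX = H(X)` with injection `iX`,
`Hk y = H(κ(y))` with specialization maps `sp y`, `Hcl y = H(O_{\overline y, z})` with
injections `icl y` into `Hk y`, and the further restrictions `sz y : Hcl y → Hkz = H(κ(z))`,
`rXz : HX → Hkz` along scheme morphisms; `hcomm1`, `hcomm2`, `hXK` express that `H` is a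
presheaf.  Purity in dimension 2 says every class of `HK` unramified at all `y` comes from
`H(X)`.  Conclusions: (1) the specialization map `H(O_{y₀}) → H(κ(y₀))` sends
`⋂_y H(O_y)` into `H(O_{\overline{y₀},z})`, and (2) the composite
`⋂_y H(O_y) → H(O_{\overline{y₀},z}) → H(κ(z))` is independent of the choice of `y₀`. -/
theorem stmt17 {HK Hkz : Type*} {ι : Type*}
    (HX : Type*) (HO : ι → Type*) (Hk : ι → Type*) (Hcl : ι → Type*)
    (iK : ∀ y, HO y → HK) (iX : HX → HK)
    (rY : ∀ y, HX → HO y)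
    (sp : ∀ y, HO y → Hk y)
    (icl : ∀ y, Hcl y → Hk y)
    (rXcl : ∀ y, HX → Hcl y)
    (sz : ∀ y, Hcl y → Hkz)
    (rXz : HX → Hkz)
    (hGS : ∀ y, Function.Injective (iK y))
    (hiX : Function.Injective iX)
    (hiclInj : ∀ y, Function.Injective (icl y))
    (hXK : ∀ y s, iK y (rY y s) = iX s)
    (hcomm1 : ∀ y s, icl y (rXcl y s) = sp y (rY y s))
    (hcomm2 : ∀ y s, sz y (rXcl y s) = rXz s)
    (hpurity : ∀ a : HK, (∀ y, a ∈ Set.range (iK y)) → a ∈ Set.range iX) :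
    (∀ (y : ι) (a : HK), (∀ y', a ∈ Set.range (iK y')) →
      ∀ t : HO y, iK y t = a → sp y t ∈ Set.range (icl y)) ∧
    (∀ (y y' : ι) (a : HK), (∀ y'', a ∈ Set.range (iK y'')) →
      ∀ (t : HO y) (t' : HO y'), iK y t = a → iK y' t' = a →
      ∀ (c : Hcl y) (c' : Hcl y'), icl y c = sp y t → icl y' c' = sp y' t' →
      sz y c = sz y' c') := by
  constructor
  · intro y a ha t ht
    obtain ⟨s, hs⟩ := hpurity a ha
    have : t = rY y s := hGS y (by rw [ht, hXK y s, hs])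
    exact ⟨rXcl y s, by rw [hcomm1, ← this]⟩
  · intro y y' a ha t t' ht ht' c c' hc hc'
    obtain ⟨s, hs⟩ := hpurity a ha
    have h1 : t = rY y s := hGS y (by rw [ht, hXK y s, hs])
    have h2 : t' = rY y' s := hGS y' (by rw [ht', hXK y' s, hs])
    have hcc : c = rXcl y s := hiclInj y (by rw [hc, hcomm1, ← h1])
    have hcc' : c' = rXcl y' s := hiclInj y' (by rw [hc', hcomm1, ← h2])
    rw [hcc, hcc', hcomm2, hcomm2]
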